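/- arXiv:2305.11495 — 3 statements merged into one kernel-verified Lean document; each statement's English description precedes it below -/
import Mathlib

section
/- For fixed constants w > 0 and 0 < p < 1, define the threshold δ = (2w(1-p))^{1/(2-p)} + w·p·(2w(1-p))^{(p-1)/(2-p)}. If |s| ≤ δ, then x = 0 minimizes the function f(x) = w|x|^p + (1/2)(x - s)^2 over all real x. -/
/-!
Comparing `f x` with `f 0`, it suffices that `|s| t ≤ w t ^ p + t ^ 2 / 2` for `t = |x| > 0`, i.e.
that `|s|` is at most `g t = w t ^ (p - 1) + t / 2`. The function `g` is stationary at
`c = (2 w (1 - p)) ^ (1 / (2 - p))`, where its value is `δ = c + w p c ^ (p - 1)`, and `δ ≤ g t`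
is Bernoulli's inequality `(t / c) ^ (p - 1) ≥ 1 + (p - 1) (t / c - 1)` for the negative exponent.
-/

open Real

theorem Real.one_add_mul_sub_one_le_rpow_of_nonpos {u r : ℝ} (hu : 0 < u) (hr : r ≤ 0) :
    1 + r * (u - 1) ≤ u ^ r := by
  have bernoulli := one_add_mul_self_le_rpow_one_add (s := u⁻¹ - 1)
    (by linarith [inv_pos.2 hu]) (p := 1 - r) (by linarith)
  rw [add_sub_cancel] at bernoulli
  calc 1 + r * (u - 1) = u * (1 + (1 - r) * (u⁻¹ - 1)) := by field_simp; ring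
    _ ≤ u * u⁻¹ ^ (1 - r) := by gcongr
    _ = u ^ r := by rw [inv_rpow hu.le, rpow_sub hu, rpow_one]; field_simp

theorem gst_threshold_mul_le {w p c t : ℝ} (hp : p ≤ 1) (hc : 0 < c)
    (hcw : c ^ (2 - p) = 2 * w * (1 - p)) (ht : 0 < t) :
    (c + w * p * c ^ (p - 1)) * t ≤ w * t ^ p + t ^ 2 / 2 := by
  have hw : 0 ≤ w := by nlinarith [hcw ▸ rpow_pos_of_pos hc (2 - p)]
  have hstat : c = 2 * w * (1 - p) * c ^ (p - 1) := by
    rw [← hcw, ← rpow_add hc]; norm_num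
  have tangent := one_add_mul_sub_one_le_rpow_of_nonpos (div_pos ht hc) (by linarith : p - 1 ≤ 0)
  rw [div_rpow ht.le hc.le, le_div_iff₀ (rpow_pos_of_pos hc _)] at tangent
  have htp : t ^ p = t ^ (p - 1) * t := by rw [rpow_sub_one ht.ne']; field_simp
  rw [htp]
  calc (c + w * p * c ^ (p - 1)) * t
      = w * t * ((1 + (p - 1) * (t / c - 1)) * c ^ (p - 1)) + t ^ 2 / 2 := by
        field_simp
        linear_combination (2 * c - t) * hstat
    _ ≤ w * t * t ^ (p - 1) + t ^ 2 / 2 := by gcongr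
    _ = w * (t ^ (p - 1) * t) + t ^ 2 / 2 := by ring

/-- Zero-branch of the generalized soft-thresholding operator:
if `|s| ≤ δ` then `x = 0` minimizes `f(x) = w|x|^p + (1/2)(x-s)^2`. -/
theorem gst_zero_branch (w p s : ℝ) (hw : 0 < w) (hp0 : 0 < p) (hp1 : p < 1)
    (hs : |s| ≤ (2 * w * (1 - p)) ^ ((1 : ℝ) / (2 - p))
        + w * p * (2 * w * (1 - p)) ^ ((p - 1) / (2 - p))) :
    ∀ x : ℝ, w * |(0 : ℝ)| ^ p + (1 / 2) * ((0 : ℝ) - s) ^ 2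
      ≤ w * |x| ^ p + (1 / 2) * (x - s) ^ 2 := by
  intro x
  have hB : 0 < 2 * w * (1 - p) := by have := sub_pos.2 hp1; positivity
  set c := (2 * w * (1 - p)) ^ ((1 : ℝ) / (2 - p))
  have hcw : c ^ (2 - p) = 2 * w * (1 - p) := by
    rw [← rpow_mul hB.le, one_div_mul_cancel (by linarith), rpow_one]
  have hexp : (2 * w * (1 - p)) ^ ((p - 1) / (2 - p)) = c ^ (p - 1) := by
    rw [← rpow_mul hB.le]; ring_nf
  rw [hexp] at hs
  rw [abs_zero, zero_rpow hp0.ne', mul_zero, zero_add]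
  rcases eq_or_ne x 0 with rfl | hx
  · simp [zero_rpow hp0.ne']
  have key := gst_threshold_mul_le hp1.le (rpow_pos_of_pos hB _) hcw (abs_pos.2 hx)
  have hsx : s * x ≤ (c + w * p * c ^ (p - 1)) * |x| :=
    calc s * x ≤ |s| * |x| := (le_abs_self _).trans (abs_mul s x).le
      _ ≤ _ := by gcongr
  nlinarith [sq_abs x]
end

section
/- Let A = U·S·Vᴴ be the SVD of an n₁ × n₂ matrix and let G be an n₂ × ℓ matrix. If rank(A) = r ≤ ℓ and the r × ℓ matrix V_rᴴ·G has rank r (where V_r consists of the first r columns of V), then the column space of Y = A·G equals the column space of A; consequently, if Q is any matrix whose orthonormal columns span the column space of Y, then Q·Qᴴ·A = A. -/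
/-!
Truncating the SVD sum after the `r` nonzero singular values gives the compact factorisation
`A = (Uᵣ Σᵣ) Vᵣᴴ`. Both `Vᵣᴴ` (orthonormal columns of `Vᵣ`) and `Vᵣᴴ G` (full row rank `r`) are
surjective, and right multiplication by a surjective matrix preserves the column space, so `A G`
and `A` share the column space of `Uᵣ Σᵣ`. Finally `Q Qᴴ` fixes the column space of `Q`, which
contains every column of `A`.
-/

open Matrix BigOperators

theorem Fin.sum_univ_eq_sum_castLE_of_eq_zero {M : Type*} [AddCommMonoid M] {r m : ℕ}
    (h : r ≤ m) (f : Fin m → M) (hf : ∀ i : Fin m, r ≤ (i : ℕ) → f i = 0) :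
    ∑ i, f i = ∑ j : Fin r, f (Fin.castLE h j) := by
  rw [← Finset.sum_subset (Finset.subset_univ (Finset.univ.map (Fin.castLEEmb h))),
    Finset.sum_map]
  · rfl
  · intro i _ hi
    refine hf i (not_lt.1 fun hir => hi ?_)
    exact Finset.mem_map.2 ⟨⟨i, hir⟩, Finset.mem_univ _, rfl⟩

namespace Matrix

variable {R : Type*} {l m n k : Type*}

theorem sum_smul_vecMulVec_eq_mul_diagonal_mul_conjTranspose [CommSemiring R] [StarRing R]
    [Fintype k] [DecidableEq k] (c : k → R) (U : Matrix l k R) (V : Matrix n k R) :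
    ∑ i, c i • vecMulVec (fun a => U a i) (fun b => star (V b i)) = U * diagonal c * Vᴴ := by
  ext a b
  rw [mul_apply]
  simp only [sum_apply, smul_apply, vecMulVec_apply, mul_diagonal, conjTranspose_apply,
    smul_eq_mul]
  exact Finset.sum_congr rfl fun i _ => by ring

theorem conjTranspose_mul_submatrix_eq_one [Semiring R] [StarRing R] [Fintype m] [DecidableEq n]
    [DecidableEq k] {V : Matrix m n R} (hV : Vᴴ * V = 1) {e : k → n}
    (he : Function.Injective e) : (V.submatrix id e)ᴴ * V.submatrix id e = 1 := by
  rw [conjTranspose_submatrix, ← submatrix_mul _ _ _ _ _ Function.bijective_id, hV,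
    submatrix_one _ he]

theorem range_mulVecLin_mul_of_surjective [CommSemiring R] [Fintype m] [Fintype n]
    (M : Matrix l m R) (N : Matrix m n R) (hN : Function.Surjective N.mulVec) :
    LinearMap.range (M * N).mulVecLin = LinearMap.range M.mulVecLin := by
  rw [mulVecLin_mul, LinearMap.range_comp, LinearMap.range_eq_top.2 hN, Submodule.map_top]

theorem mulVec_surjective_of_rank_eq_card [Field R] [Fintype m] [Fintype n] (M : Matrix m n R)
    (hM : M.rank = Fintype.card m) : Function.Surjective M.mulVec :=
  LinearMap.range_eq_top.1 <| Submodule.eq_top_of_finrank_eq <|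
    hM.trans (Module.finrank_fintype_fun_eq_card R).symm

theorem mul_mul_eq_of_range_le_of_mul_eq_one [CommSemiring R] [Fintype l] [Fintype m]
    [DecidableEq m] [Fintype n] {Q : Matrix l m R} {P : Matrix m l R} (hPQ : P * Q = 1)
    {A : Matrix l n R}
    (hA : LinearMap.range A.mulVecLin ≤ LinearMap.range Q.mulVecLin) : Q * P * A = A := by
  refine ext_iff_mulVec.2 fun v => ?_
  obtain ⟨c, hc : Q *ᵥ c = A *ᵥ v⟩ := hA ⟨v, rfl⟩
  rw [← mulVec_mulVec, ← hc, mulVec_mulVec, Matrix.mul_assoc, hPQ, Matrix.mul_one]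

end Matrix

theorem range_finder_exact_general (n₁ n₂ ℓ r : ℕ) (A : Matrix (Fin n₁) (Fin n₂) ℂ)
    (G : Matrix (Fin n₂) (Fin ℓ) ℂ)
    (U : Matrix (Fin n₁) (Fin n₁) ℂ) (V : Matrix (Fin n₂) (Fin n₂) ℂ)
    (σ : Fin (min n₁ n₂) → ℝ)
    (hV : Vᴴ * V = 1)
    (hA : A = ∑ i : Fin (min n₁ n₂), (σ i : ℂ) •
        Matrix.vecMulVec (fun a => U a (Fin.castLE (min_le_left n₁ n₂) i))
          (fun b => star (V b (Fin.castLE (min_le_right n₁ n₂) i))))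
    (hrm : r ≤ min n₁ n₂)
    (hσ : ∀ i : Fin (min n₁ n₂), σ i ≠ 0 ↔ (i : ℕ) < r)
    (Vr : Matrix (Fin n₂) (Fin r) ℂ)
    (hVr : Vr = Matrix.of fun i j =>
      V i (Fin.castLE (le_trans hrm (min_le_right n₁ n₂)) j))
    (hG : (Vrᴴ * G).rank = r) :
    LinearMap.range (Matrix.mulVecLin (A * G)) = LinearMap.range (Matrix.mulVecLin A) ∧
    ∀ (ℓ' : ℕ) (Q : Matrix (Fin n₁) (Fin ℓ') ℂ), Qᴴ * Q = 1 →
      LinearMap.range (Matrix.mulVecLin Q)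
        = LinearMap.range (Matrix.mulVecLin (A * G)) →
      Q * Qᴴ * A = A := by
  set B : Matrix (Fin n₁) (Fin r) ℂ :=
    (Matrix.of fun a j => U a (Fin.castLE (le_trans hrm (min_le_left n₁ n₂)) j)) *
      Matrix.diagonal fun j => (σ (Fin.castLE hrm j) : ℂ)
  have hcompact : A = B * Vrᴴ := by
    rw [hA, Fin.sum_univ_eq_sum_castLE_of_eq_zero hrm _ fun i hi => by
      have hσi : σ i = 0 := not_not.1 ((hσ i).not.2 hi.not_gt)
      simp [hσi], hVr]
    exact sum_smul_vecMulVec_eq_mul_diagonal_mul_conjTranspose _ _ _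
  have hVr_surj : Function.Surjective Vrᴴ.mulVec :=
    mulVec_surjective_iff_exists_right_inverse.2
      ⟨Vr, hVr ▸ conjTranspose_mul_submatrix_eq_one hV (Fin.castLE_injective _)⟩
  have hsketch_surj : Function.Surjective (Vrᴴ * G).mulVec :=
    mulVec_surjective_of_rank_eq_card _ (by rw [hG, Fintype.card_fin])
  have hrange : LinearMap.range (A * G).mulVecLin = LinearMap.range A.mulVecLin := by
    rw [hcompact, Matrix.mul_assoc, range_mulVecLin_mul_of_surjective _ _ hsketch_surj,
      range_mulVecLin_mul_of_surjective _ _ hVr_surj]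
  exact ⟨hrange, fun _ _ hQ hQrange =>
    mul_mul_eq_of_range_le_of_mul_eq_one hQ (hQrange.trans hrange).ge⟩

/-- Exactness of the randomized range finder: if `rank A = r ≤ ℓ` and the sketch
`Vᵣᴴ·G` has full rank `r`, then the column space of `A·G` equals that of `A`, and any
orthonormal basis matrix `Q` of that space satisfies `Q·Qᴴ·A = A`. -/
theorem range_finder_exact (n₁ n₂ ℓ r : ℕ) (A : Matrix (Fin n₁) (Fin n₂) ℂ)
    (G : Matrix (Fin n₂) (Fin ℓ) ℂ)
    (U : Matrix (Fin n₁) (Fin n₁) ℂ) (V : Matrix (Fin n₂) (Fin n₂) ℂ)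
    (σ : Fin (min n₁ n₂) → ℝ)
    (hU : Uᴴ * U = 1) (hV : Vᴴ * V = 1) (hVV : V * Vᴴ = 1)
    (hA : A = ∑ i : Fin (min n₁ n₂), (σ i : ℂ) •
        Matrix.vecMulVec (fun a => U a (Fin.castLE (min_le_left n₁ n₂) i))
          (fun b => star (V b (Fin.castLE (min_le_right n₁ n₂) i))))
    (hrm : r ≤ min n₁ n₂)
    (hσ : ∀ i : Fin (min n₁ n₂), σ i ≠ 0 ↔ (i : ℕ) < r)
    (hrank : A.rank = r) (hrl : r ≤ ℓ)
    (Vr : Matrix (Fin n₂) (Fin r) ℂ)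
    (hVr : Vr = Matrix.of fun i j =>
      V i (Fin.castLE (le_trans hrm (min_le_right n₁ n₂)) j))
    (hG : (Vrᴴ * G).rank = r) :
    LinearMap.range (Matrix.mulVecLin (A * G)) = LinearMap.range (Matrix.mulVecLin A) ∧
    ∀ (ℓ' : ℕ) (Q : Matrix (Fin n₁) (Fin ℓ') ℂ), Qᴴ * Q = 1 →
      LinearMap.range (Matrix.mulVecLin Q)
        = LinearMap.range (Matrix.mulVecLin (A * G)) →
      Q * Qᴴ * A = A :=
  range_finder_exact_general n₁ n₂ ℓ r A G U V σ hV hA hrm hσ Vr hVr hG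
end

section
/- Let m ≥ 1, let σ : Fin m → ℝ≥0 be nonincreasing and w : Fin m → ℝ≥0 be nondecreasing. Define δᵢ = GST(σᵢ, wᵢ, p) for 0 < p < 1, where GST(s, w, p) = 0 if s ≤ δ(w) and otherwise equals the largest solution of x + w·p·x^{p-1} = s, with δ(w) = (2w(1-p))^{1/(2-p)} + w·p·(2w(1-p))^{(p-1)/(2-p)}. Then δ : Fin m → ℝ≥0 is nonincreasing. -/
/-- The GST threshold `δ(w) = (2w(1-p))^{1/(2-p)} + w·p·(2w(1-p))^{(p-1)/(2-p)}`. -/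
noncomputable def gstThreshold (p w : ℝ) : ℝ :=
  (2 * w * (1 - p)) ^ ((1 : ℝ) / (2 - p))
    + w * p * (2 * w * (1 - p)) ^ ((p - 1) / (2 - p))

/-- The generalized soft-thresholding operator: `0` below the threshold, otherwise
the largest positive solution of `x + w·p·x^{p-1} = s`. -/
noncomputable def GST (p s w : ℝ) : ℝ :=
  if s ≤ gstThreshold p w then 0
  else sSup {x : ℝ | 0 < x ∧ x + w * p * x ^ (p - 1) = s}

lemma gstThreshold_eq (p : ℝ) (hp0 : 0 < p) (hp1 : p < 1) {w : ℝ} (hw : 0 ≤ w) :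
    gstThreshold p w
      = ((2 * (1 - p)) ^ ((1:ℝ)/(2-p)) + p * (2 * (1 - p)) ^ ((p-1)/(2-p)))
          * w ^ ((1:ℝ)/(2-p)) := by
  have h2p : (0:ℝ) < 2 - p := by linarith
  have hc : (0:ℝ) < 2 * (1 - p) := by linarith
  unfold gstThreshold
  rw [show 2 * w * (1 - p) = (2 * (1 - p)) * w by ring]
  rw [Real.mul_rpow hc.le hw, Real.mul_rpow hc.le hw]
  rcases eq_or_lt_of_le hw with h | h
  · subst h
    rw [Real.zero_rpow (by positivity : (1:ℝ)/(2-p) ≠ 0),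
        Real.zero_rpow (by
          intro hz
          have := div_eq_zero_iff.mp hz
          rcases this with h1 | h1 <;> linarith)]
    ring
  · have hae : (1:ℝ) + (p-1)/(2-p) = 1/(2-p) := by field_simp; ring
    have hww : w ^ ((1:ℝ)/(2-p)) = w * w ^ ((p-1)/(2-p)) := by
      rw [← hae, Real.rpow_add h, Real.rpow_one]
    rw [hww]; ring

lemma gstThreshold_mono (p : ℝ) (hp0 : 0 < p) (hp1 : p < 1) {w₁ w₂ : ℝ}
    (h0 : 0 ≤ w₁) (h : w₁ ≤ w₂) : gstThreshold p w₁ ≤ gstThreshold p w₂ := by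
  have h2p : (0:ℝ) < 2 - p := by linarith
  have hc : (0:ℝ) < 2 * (1 - p) := by linarith
  rw [gstThreshold_eq p hp0 hp1 h0, gstThreshold_eq p hp0 hp1 (h0.trans h)]
  have hC : 0 ≤ (2 * (1 - p)) ^ ((1:ℝ)/(2-p)) + p * (2 * (1 - p)) ^ ((p-1)/(2-p)) := by
    have := Real.rpow_nonneg hc.le ((1:ℝ)/(2-p))
    have := Real.rpow_nonneg hc.le ((p-1)/(2-p))
    nlinarith
  exact mul_le_mul_of_nonneg_left
    (Real.rpow_le_rpow h0 h (by positivity)) hC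

/-- With nonincreasing singular values and nondecreasing weights, the thresholded
values `δᵢ = GST(σᵢ, wᵢ, p)` are nonincreasing. -/
theorem gst_ordered (m : ℕ) (p : ℝ) (hp0 : 0 < p) (hp1 : p < 1)
    (σ w : Fin m → ℝ) (hσ0 : ∀ i, 0 ≤ σ i) (hw0 : ∀ i, 0 ≤ w i)
    (hσ : Antitone σ) (hw : Monotone w) :
    Antitone (fun i => GST p (σ i) (w i)) := by
  intro i j hij
  simp only
  set s₁ := σ i with hs₁
  set s₂ := σ j with hs₂
  set w₁ := w i with hw₁
  set w₂ := w j with hw₂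
  have hss : s₂ ≤ s₁ := hσ hij
  have hww : w₁ ≤ w₂ := hw hij
  have hw₁0 : 0 ≤ w₁ := hw0 i
  have hw₂0 : 0 ≤ w₂ := hw0 j
  -- the solution sets
  set S₁ : Set ℝ := {x : ℝ | 0 < x ∧ x + w₁ * p * x ^ (p - 1) = s₁} with hS₁
  set S₂ : Set ℝ := {x : ℝ | 0 < x ∧ x + w₂ * p * x ^ (p - 1) = s₂} with hS₂
  have hsup₁_nonneg : 0 ≤ sSup S₁ := Real.sSup_nonneg (fun x hx => hx.1.le)
  have hbdd₁ : BddAbove S₁ := by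
    refine ⟨s₁, fun x hx => ?_⟩
    have hx1 : 0 < x := hx.1
    have : 0 ≤ w₁ * p * x ^ (p - 1) := by positivity
    linarith [hx.2]
  by_cases hA : s₂ ≤ gstThreshold p w₂
  · -- GST at j is 0
    rw [GST, if_pos hA, GST]
    split_ifs with h
    · exact le_rfl
    · exact hsup₁_nonneg
  · -- s₂ > δ(w₂) ≥ δ(w₁), so s₁ ≥ s₂ > δ(w₁)
    have hB : ¬ s₁ ≤ gstThreshold p w₁ := by
      have := gstThreshold_mono p hp0 hp1 hw₁0 hww
      intro h; exact hA (hss.trans (h.trans this))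
    rw [GST, if_neg hA, GST, if_neg hB]
    refine Real.sSup_le (fun x hx => ?_) hsup₁_nonneg
    obtain ⟨hx0, hxeq⟩ := hx
    have hxs₂ : x ≤ s₂ := by
      have : 0 ≤ w₂ * p * x ^ (p - 1) := by positivity
      linarith
    have hxs₁ : x ≤ s₁ := hxs₂.trans hss
    -- f₁(x) ≤ s₁ ≤ f₁(s₁); IVT gives y ∈ [x, s₁] with f₁(y) = s₁
    have hcont : ContinuousOn (fun t : ℝ => t + w₁ * p * t ^ (p - 1)) (Set.Icc x s₁) := by
      apply ContinuousOn.add continuousOn_id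
      apply ContinuousOn.mul continuousOn_const
      exact ContinuousOn.rpow_const continuousOn_id
        (fun t ht => Or.inl (ne_of_gt (lt_of_lt_of_le hx0 ht.1)))
    have hfx : x + w₁ * p * x ^ (p - 1) ≤ s₁ := by
      have hx' : 0 ≤ p * x ^ (p - 1) := by positivity
      nlinarith
    have hfs : s₁ ≤ s₁ + w₁ * p * s₁ ^ (p - 1) := by
      have h0s : 0 < s₁ := lt_of_lt_of_le hx0 hxs₁
      have : 0 ≤ w₁ * p * s₁ ^ (p - 1) := by positivity
      linarith
    have hmem : s₁ ∈ Set.Icc (x + w₁ * p * x ^ (p - 1)) (s₁ + w₁ * p * s₁ ^ (p - 1)) :=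
      ⟨hfx, hfs⟩
    obtain ⟨y, hyIcc, hyeq⟩ := intermediate_value_Icc hxs₁ hcont hmem
    have hy0 : 0 < y := lt_of_lt_of_le hx0 hyIcc.1
    have hyS₁ : y ∈ S₁ := ⟨hy0, hyeq⟩
    exact hyIcc.1.trans (le_csSup hbdd₁ hyS₁)
end
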